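/- Let M ≥ 1 and C₁ > 0, let Ω₀ be a p×p real symmetric positive definite matrix with Σ₀ = Ω₀⁻¹ satisfying Λmax(Σ₀) ≤ M, and let s ∈ ℝ^p have nonnegative entries with Σ₀ − (1/2)diag(s) positive semidefinite; set B₀ = (2diag(s) − diag(s)Ω₀diag(s))^{1/2} (assumed positive semidefinite). Let Z be an n×p random matrix with i.i.d. N(0,1) entries, and let ε = (ε₁,…,ε_n) be independent of Z with i.i.d. components satisfying P(|ε_i| > t) ≤ C₁·exp(−t²/C₁) for all t > 0. Then there exist constants c > 0 and C > 0 depending only on M and C₁ such that for all integers n ≥ 1 and p ≥ 2 with C²·log p ≤ n, P( ‖n⁻¹B₀ᵀZᵀε‖∞ ≤ C·√((log p)/n) ) ≥ 1 − C·p^{−c}. -/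

import Mathlib

open Matrix MeasureTheory ProbabilityTheory Finset
open scoped Classical BigOperators ENNReal

noncomputable section

/-- Supremum norm of a real vector. -/
def supNorm {ι : Type*} [Fintype ι] (v : ι → ℝ) : ℝ := ⨆ i, |v i|

/-- Largest eigenvalue (Rayleigh quotient sup) of a real symmetric matrix. -/
def lambdaMax {n : Type*} [Fintype n] (A : Matrix n n ℝ) : ℝ :=
  sSup {r | ∃ x : n → ℝ, ∑ i, (x i) ^ 2 = 1 ∧ r = x ⬝ᵥ A.mulVec x}

/-- Positive semidefinite square root (0 if the matrix is not psd). -/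
def msqrt {n : Type*} [Fintype n] [DecidableEq n] (A : Matrix n n ℝ) : Matrix n n ℝ :=
  if h : A.PosSemidef then
    (h.1.eigenvectorUnitary : Matrix n n ℝ) * Matrix.diagonal (Real.sqrt ∘ h.1.eigenvalues) *
      (star h.1.eigenvectorUnitary : Matrix n n ℝ)
  else 0

/-- `B^Ω`, the psd square root of `2 diag(s) - diag(s) Ω diag(s)`. -/
def Bmat {p : ℕ} (s : Fin p → ℝ) (Om : Matrix (Fin p) (Fin p) ℝ) :
    Matrix (Fin p) (Fin p) ℝ :=
  msqrt ((2 : ℝ) • Matrix.diagonal s - Matrix.diagonal s * Om * Matrix.diagonal s)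


section Helpers
open Real Set
open scoped NNReal
open scoped NNReal
variable {W : Type*} [MeasurableSpace W] {μ : Measure W} [IsProbabilityMeasure μ]


lemma gauss_pdf_mul (a x : ℝ) :
    gaussianPDFReal 0 1 x * rexp (a * x) = rexp (a ^ 2 / 2) * gaussianPDFReal a 1 x := by
  simp only [gaussianPDFReal, NNReal.coe_one, mul_one, sub_zero]
  rw [mul_assoc, ← Real.exp_add, mul_left_comm, ← Real.exp_add]
  congr 1
  ring

lemma meas_exp_mul (a : ℝ) : Measurable fun x : ℝ => rexp (a * x) :=
  (measurable_id.const_mul a).exp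

lemma lintegral_exp_gaussian (a : ℝ) :
    ∫⁻ x, ENNReal.ofReal (rexp (a * x)) ∂(gaussianReal 0 1) = ENNReal.ofReal (rexp (a ^ 2 / 2)) := by
  rw [gaussianReal_of_var_ne_zero 0 one_ne_zero]
  rw [lintegral_withDensity_eq_lintegral_mul _ (measurable_gaussianPDF 0 1)
    (meas_exp_mul a).ennreal_ofReal]
  have : ∀ x, (gaussianPDF 0 1 * fun x => ENNReal.ofReal (rexp (a * x))) x
      = ENNReal.ofReal (rexp (a ^ 2 / 2)) * ENNReal.ofReal (gaussianPDFReal a 1 x) := by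
    intro x
    simp only [Pi.mul_apply, gaussianPDF]
    rw [← ENNReal.ofReal_mul (gaussianPDFReal_nonneg 0 1 x), gauss_pdf_mul,
      ENNReal.ofReal_mul (exp_nonneg _)]
  simp_rw [this]
  rw [lintegral_const_mul _ (measurable_gaussianPDFReal a 1).ennreal_ofReal]
  rw [lintegral_gaussianPDFReal_eq_one a one_ne_zero, mul_one]

lemma integrable_exp_gaussian (a : ℝ) :
    Integrable (fun x => rexp (a * x)) (gaussianReal 0 1) := by
  constructor
  · exact (meas_exp_mul a).aestronglyMeasurable
  · rw [hasFiniteIntegral_iff_ofReal (ae_of_all _ fun x => (exp_nonneg _))]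
    rw [lintegral_exp_gaussian]
    exact ENNReal.ofReal_lt_top

lemma integral_exp_gaussian (a : ℝ) :
    ∫ x, rexp (a * x) ∂(gaussianReal 0 1) = rexp (a ^ 2 / 2) := by
  rw [integral_eq_lintegral_of_nonneg_ae (ae_of_all _ fun x => (exp_nonneg _))
    (meas_exp_mul a).aestronglyMeasurable]
  rw [lintegral_exp_gaussian, ENNReal.toReal_ofReal (exp_nonneg _)]




lemma subg_lintegral_exp_sq {C₁ : ℝ} (hC₁ : 0 < C₁) {X : W → ℝ} (hX : Measurable X)
    (htail : ∀ t : ℝ, 0 < t → μ {ω | t < |X ω|} ≤ ENNReal.ofReal (C₁ * rexp (-(t ^ 2) / C₁))) :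
    ∫⁻ ω, ENNReal.ofReal (rexp ((2 * C₁)⁻¹ * (X ω) ^ 2)) ∂μ ≤ ENNReal.ofReal (1 + C₁) := by
  set lam : ℝ := (2 * C₁)⁻¹ with hlam
  have hlam_pos : 0 < lam := by positivity
  have hmf : Measurable fun ω => rexp (lam * (X ω) ^ 2) := ((hX.pow_const 2).const_mul lam).exp
  rw [lintegral_eq_lintegral_meas_lt μ (ae_of_all _ fun ω => (exp_nonneg _)) hmf.aemeasurable]
  have hsplit : (Set.Ioi (0:ℝ)) = Set.Ioc (0:ℝ) 1 ∪ Set.Ioi (1:ℝ) := (Set.Ioc_union_Ioi_eq_Ioi zero_le_one).symm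
  rw [hsplit, lintegral_union measurableSet_Ioi (Set.Ioc_disjoint_Ioi le_rfl)]
  have h1 : ∫⁻ t in Set.Ioc (0:ℝ) 1, μ {a | t < rexp (lam * X a ^ 2)} ≤ 1 := by
    calc ∫⁻ t in Set.Ioc (0:ℝ) 1, μ {a | t < rexp (lam * X a ^ 2)}
        ≤ ∫⁻ _ in Set.Ioc (0:ℝ) 1, 1 := lintegral_mono fun t => prob_le_one
      _ = 1 := by simp
  have h2 : ∫⁻ t in Set.Ioi (1:ℝ), μ {a | t < rexp (lam * X a ^ 2)} ≤ ENNReal.ofReal C₁ := by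
    have hbd : ∀ t ∈ Set.Ioi (1:ℝ), μ {a | t < rexp (lam * X a ^ 2)}
        ≤ ENNReal.ofReal (C₁ * rexp (-2 * Real.log t)) := by
      intro t ht
      have ht1 : (1:ℝ) < t := ht
      have hlogt : 0 < Real.log t := Real.log_pos ht1
      set u : ℝ := Real.sqrt (2 * C₁ * Real.log t) with hu
      have hu_pos : 0 < u := Real.sqrt_pos.2 (by positivity)
      have hsub : {a | t < rexp (lam * X a ^ 2)} ⊆ {ω | u < |X ω|} := by
        intro a ha
        simp only [Set.mem_setOf_eq] at ha ⊢
        have hlt : Real.log t < lam * X a ^ 2 := by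
          have := Real.log_lt_log (by linarith) ha
          rwa [Real.log_exp] at this
        have hX2 : 2 * C₁ * Real.log t < X a ^ 2 := by
          have h2C : (0:ℝ) < 2 * C₁ := by positivity
          calc 2 * C₁ * Real.log t < 2 * C₁ * (lam * X a ^ 2) := by
                exact (mul_lt_mul_iff_right₀ h2C).2 hlt
            _ = X a ^ 2 := by rw [hlam, ← mul_assoc, mul_inv_cancel₀ h2C.ne', one_mul]
        calc u < Real.sqrt (X a ^ 2) := by
              exact Real.sqrt_lt_sqrt (by positivity) hX2
          _ = |X a| := Real.sqrt_sq_eq_abs _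
      have hu2 : u ^ 2 = 2 * C₁ * Real.log t := Real.sq_sqrt (by positivity)
      calc μ {a | t < rexp (lam * X a ^ 2)} ≤ μ {ω | u < |X ω|} := measure_mono hsub
        _ ≤ ENNReal.ofReal (C₁ * rexp (-(u ^ 2) / C₁)) := htail u hu_pos
        _ = ENNReal.ofReal (C₁ * rexp (-2 * Real.log t)) := by
            congr 2
            rw [hu2]
            field_simp
    calc ∫⁻ t in Set.Ioi (1:ℝ), μ {a | t < rexp (lam * X a ^ 2)}
        ≤ ∫⁻ t in Set.Ioi (1:ℝ), ENNReal.ofReal (C₁ * rexp (-2 * Real.log t)) := by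
          refine setLIntegral_mono ?_ hbd
          exact (measurable_const.mul ((measurable_const.mul Real.measurable_log).exp)).ennreal_ofReal
      _ = ENNReal.ofReal C₁ * ∫⁻ t in Set.Ioi (1:ℝ), ENNReal.ofReal (rexp (-2 * Real.log t)) := by
          simp_rw [ENNReal.ofReal_mul hC₁.le]
          rw [lintegral_const_mul _ ((Real.measurable_log.const_mul (-2)).exp).ennreal_ofReal]
      _ ≤ ENNReal.ofReal C₁ * 1 := by
          gcongr
          have heq : ∀ t ∈ Set.Ioi (1:ℝ), ENNReal.ofReal (rexp (-2 * Real.log t))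
              = ENNReal.ofReal (t ^ (-2:ℝ)) := by
            intro t ht
            congr 1
            rw [Real.rpow_def_of_pos (by linarith [mem_Ioi.1 ht]), mul_comm]
          rw [setLIntegral_congr_fun measurableSet_Ioi heq]
          have hint : IntegrableOn (fun t : ℝ => t ^ (-2:ℝ)) (Set.Ioi 1) :=
            integrableOn_Ioi_rpow_of_lt (by norm_num) zero_lt_one
          rw [← ofReal_integral_eq_lintegral_ofReal hint
            ((ae_restrict_iff' measurableSet_Ioi).2 (ae_of_all _ fun t ht => Real.rpow_nonneg (le_of_lt (lt_trans zero_lt_one ht)) _))]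
          rw [integral_Ioi_rpow_of_lt (by norm_num) zero_lt_one]
          norm_num
      _ = ENNReal.ofReal C₁ := mul_one _
  calc _ ≤ (1 : ℝ≥0∞) + ENNReal.ofReal C₁ := add_le_add h1 h2
    _ = ENNReal.ofReal (1 + C₁) := by rw [ENNReal.ofReal_add zero_le_one hC₁.le, ENNReal.ofReal_one]

lemma subg_integrable_exp_sq {C₁ : ℝ} (hC₁ : 0 < C₁) {X : W → ℝ} (hX : Measurable X)
    (htail : ∀ t : ℝ, 0 < t → μ {ω | t < |X ω|} ≤ ENNReal.ofReal (C₁ * rexp (-(t ^ 2) / C₁))) :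
    Integrable (fun ω => rexp ((2 * C₁)⁻¹ * (X ω) ^ 2)) μ := by
  constructor
  · exact (((hX.pow_const 2).const_mul _).exp).aestronglyMeasurable
  · rw [hasFiniteIntegral_iff_ofReal (ae_of_all _ fun ω => (exp_nonneg _))]
    exact lt_of_le_of_lt (subg_lintegral_exp_sq hC₁ hX htail) ENNReal.ofReal_lt_top

lemma subg_mgf_sq_le {C₁ : ℝ} (hC₁ : 0 < C₁) {X : W → ℝ} (hX : Measurable X)
    (htail : ∀ t : ℝ, 0 < t → μ {ω | t < |X ω|} ≤ ENNReal.ofReal (C₁ * rexp (-(t ^ 2) / C₁))) :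
    mgf (fun ω => (X ω) ^ 2) μ (2 * C₁)⁻¹ ≤ 1 + C₁ := by
  rw [mgf, integral_eq_lintegral_of_nonneg_ae (ae_of_all _ fun ω => (exp_nonneg _))
    (((hX.pow_const 2).const_mul _).exp).aestronglyMeasurable]
  rw [← ENNReal.toReal_ofReal (by positivity : (0:ℝ) ≤ 1 + C₁)]
  refine ENNReal.toReal_mono ENNReal.ofReal_ne_top ?_
  exact subg_lintegral_exp_sq hC₁ hX htail


lemma mgf_scaled_gauss {Y : W → ℝ} (hY : Measurable Y) (hg : μ.map Y = gaussianReal 0 1)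
    (a : ℝ) : mgf (fun ω => a * Y ω) μ 1 = rexp (a ^ 2 / 2) ∧
      Integrable (fun ω => rexp (a * Y ω)) μ := by
  have hfm : AEStronglyMeasurable (fun x : ℝ => rexp (a * x)) (μ.map Y) :=
    ((measurable_id.const_mul a).exp).aestronglyMeasurable
  have hmap : ∫ x, rexp (a * x) ∂(μ.map Y) = ∫ ω, rexp (a * Y ω) ∂μ :=
    integral_map hY.aemeasurable hfm
  have hintg : Integrable (fun x : ℝ => rexp (a * x)) (μ.map Y) := by
    rw [hg]; exact integrable_exp_gaussian a
  constructor
  · rw [mgf]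
    have : ∀ ω, rexp (1 * (a * Y ω)) = rexp (a * Y ω) := by intro ω; rw [one_mul]
    simp_rw [this]
    rw [← hmap, hg, integral_exp_gaussian]
  · exact (integrable_map_measure hfm hY.aemeasurable).1 hintg

/-- Chernoff bound for a linear combination of independent standard gaussians. -/
lemma gauss_chernoff {ι : Type*} [Fintype ι] (Z' : ι → W → ℝ)
    (hmeas : ∀ i, Measurable (Z' i))
    (hindep : iIndepFun Z' μ)
    (hgauss : ∀ i, μ.map (Z' i) = gaussianReal 0 1)
    (c : ι → ℝ) {V T : ℝ} (hV : 0 < V) (hc : ∑ i, (c i) ^ 2 ≤ V) (hT : 0 < T) :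
    μ {ω | T ≤ ∑ i, c i * Z' i ω} ≤ ENNReal.ofReal (rexp (-(T ^ 2) / (2 * V))) := by
  classical
  set θ : ℝ := T / V with hθdef
  have hθ : 0 < θ := div_pos hT hV
  set Y : ι → W → ℝ := fun i ω => θ * c i * Z' i ω with hYdef
  have hYmeas : ∀ i, Measurable (Y i) := fun i => (hmeas i).const_mul _
  have hYindep : iIndepFun Y μ := by
    exact hindep.comp (fun i => fun x => θ * c i * x) (fun i => measurable_id.const_mul _)
  have hmgf : ∀ i, mgf (Y i) μ 1 = rexp ((θ * c i) ^ 2 / 2) :=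
    fun i => (mgf_scaled_gauss (hmeas i) (hgauss i) (θ * c i)).1
  have hint : ∀ i, Integrable (fun ω => rexp (1 * Y i ω)) μ := by
    intro i
    simp only [one_mul, hYdef]
    exact (mgf_scaled_gauss (hmeas i) (hgauss i) (θ * c i)).2
  have hintS : Integrable (fun ω => rexp (1 * (∑ i, Y i) ω)) μ :=
    iIndepFun.integrable_exp_mul_sum hYindep hYmeas (fun i _ => hint i)
  have hch := measure_ge_le_exp_mul_mgf (μ := μ) (X := ∑ i, Y i) (θ * T) zero_le_one hintS
  have hmgfS : mgf (∑ i, Y i) μ 1 = rexp (θ ^ 2 * (∑ i, (c i) ^ 2) / 2) := by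
    rw [iIndepFun.mgf_sum hYindep hYmeas]
    rw [Finset.prod_congr rfl (fun i _ => hmgf i), ← Real.exp_sum]
    rw [Finset.mul_sum, Finset.sum_div]
    congr 1
    apply Finset.sum_congr rfl; intro i _; ring
  have hset : {ω | T ≤ ∑ i, c i * Z' i ω} = {ω | θ * T ≤ (∑ i, Y i) ω} := by
    ext ω
    simp only [Set.mem_setOf_eq, Finset.sum_apply, hYdef]
    have : ∑ i, θ * c i * Z' i ω = θ * ∑ i, c i * Z' i ω := by
      rw [Finset.mul_sum]; apply Finset.sum_congr rfl; intro i _; ring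
    rw [this]
    constructor
    · intro h; exact mul_le_mul_of_nonneg_left h hθ.le
    · intro h; exact le_of_mul_le_mul_left h hθ
  rw [hset]
  have hfin : μ {ω | θ * T ≤ (∑ i, Y i) ω} ≠ ⊤ := measure_ne_top _ _
  rw [← ENNReal.ofReal_toReal hfin]
  apply ENNReal.ofReal_le_ofReal
  calc (μ {ω | θ * T ≤ (∑ i, Y i) ω}).toReal
      ≤ rexp (-1 * (θ * T)) * mgf (∑ i, Y i) μ 1 := hch
    _ = rexp (-(θ * T) + θ ^ 2 * (∑ i, (c i) ^ 2) / 2) := by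
        rw [hmgfS, ← Real.exp_add]; ring_nf
    _ ≤ rexp (-(θ * T) + θ ^ 2 * V / 2) := by
        apply Real.exp_le_exp.2
        have : θ ^ 2 * (∑ i, (c i) ^ 2) ≤ θ ^ 2 * V := by
          apply mul_le_mul_of_nonneg_left hc (sq_nonneg θ)
        linarith
    _ = rexp (-(T ^ 2) / (2 * V)) := by
        congr 1
        rw [hθdef]
        field_simp
        ring


/-- Two-sided Chernoff bound for gaussian linear combinations. -/
lemma gauss_chernoff_abs {ι : Type*} [Fintype ι] (Z' : ι → W → ℝ)
    (hmeas : ∀ i, Measurable (Z' i))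
    (hindep : iIndepFun Z' μ)
    (hgauss : ∀ i, μ.map (Z' i) = gaussianReal 0 1)
    (c : ι → ℝ) {V T : ℝ} (hV : 0 < V) (hc : ∑ i, (c i) ^ 2 ≤ V) (hT : 0 < T) :
    μ {ω | T < |∑ i, c i * Z' i ω|} ≤ ENNReal.ofReal (2 * rexp (-(T ^ 2) / (2 * V))) := by
  have hneg : ∀ ω, ∑ i, (fun i => -c i) i * Z' i ω = -∑ i, c i * Z' i ω := by
    intro ω
    rw [← Finset.sum_neg_distrib]
    apply Finset.sum_congr rfl; intro i _; ring
  have hsub : {ω | T < |∑ i, c i * Z' i ω|} ⊆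
      {ω | T ≤ ∑ i, c i * Z' i ω} ∪ {ω | T ≤ ∑ i, (fun i => -c i) i * Z' i ω} := by
    intro ω hω
    simp only [Set.mem_setOf_eq, Set.mem_union] at hω ⊢
    rcases lt_abs.1 hω with h | h
    · exact Or.inl h.le
    · right; rw [hneg ω]; linarith
  calc μ {ω | T < |∑ i, c i * Z' i ω|}
      ≤ μ ({ω | T ≤ ∑ i, c i * Z' i ω} ∪ {ω | T ≤ ∑ i, (fun i => -c i) i * Z' i ω}) :=
        measure_mono hsub
    _ ≤ μ {ω | T ≤ ∑ i, c i * Z' i ω} + μ {ω | T ≤ ∑ i, (fun i => -c i) i * Z' i ω} :=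
        measure_union_le _ _
    _ ≤ ENNReal.ofReal (rexp (-(T ^ 2) / (2 * V))) + ENNReal.ofReal (rexp (-(T ^ 2) / (2 * V))) := by
        refine add_le_add (gauss_chernoff Z' hmeas hindep hgauss c hV hc hT)
          (gauss_chernoff Z' hmeas hindep hgauss (fun i => -c i) hV ?_ hT)
        simpa using hc
    _ = ENNReal.ofReal (2 * rexp (-(T ^ 2) / (2 * V))) := by
        rw [← ENNReal.ofReal_add (exp_nonneg _) (exp_nonneg _)]
        congr 1
        ring

/-- Chernoff bound for the sum of squared sub-Gaussians. -/
lemma eps_chernoff {C₁ : ℝ} (hC₁ : 0 < C₁) {n : ℕ} (ε : W → Fin n → ℝ)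
    (hmeas : Measurable ε)
    (hiid : iIndepFun (fun i ω => ε ω i) μ)
    (htail : ∀ i (t : ℝ), 0 < t →
      μ {ω | t < |ε ω i|} ≤ ENNReal.ofReal (C₁ * rexp (-(t ^ 2) / C₁))) :
    μ {ω | 2 * C₁ * (Real.log (1 + C₁) + 1) * n ≤ ∑ i, (ε ω i) ^ 2}
      ≤ ENNReal.ofReal (rexp (-(n : ℝ))) := by
  classical
  set lam : ℝ := (2 * C₁)⁻¹ with hlam
  have hlam_pos : 0 < lam := by positivity
  set Kp : ℝ := 2 * C₁ * (Real.log (1 + C₁) + 1) with hKp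
  set X : Fin n → W → ℝ := fun i ω => (ε ω i) ^ 2 with hX
  have hXmeas : ∀ i, Measurable (X i) := fun i => ((measurable_pi_apply i).comp hmeas).pow_const 2
  have hεmeas : ∀ i, Measurable (fun ω => ε ω i) := fun i => (measurable_pi_apply i).comp hmeas
  have hXindep : iIndepFun X μ :=
    hiid.comp (fun i => fun x : ℝ => x ^ 2) (fun i => measurable_id.pow_const 2)
  have hXint : ∀ i, Integrable (fun ω => rexp (lam * X i ω)) μ := fun i =>
    subg_integrable_exp_sq hC₁ (hεmeas i) (htail i)
  have hintS : Integrable (fun ω => rexp (lam * (∑ i, X i) ω)) μ :=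
    iIndepFun.integrable_exp_mul_sum hXindep hXmeas (fun i _ => hXint i)
  have hch := measure_ge_le_exp_mul_mgf (μ := μ) (X := ∑ i, X i) (Kp * n) hlam_pos.le hintS
  have hmgf : mgf (∑ i, X i) μ lam ≤ (1 + C₁) ^ n := by
    rw [iIndepFun.mgf_sum hXindep hXmeas]
    calc ∏ i : Fin n, mgf (X i) μ lam ≤ ∏ _i : Fin n, (1 + C₁) := by
          apply Finset.prod_le_prod (fun i _ => mgf_nonneg)
          intro i _
          exact subg_mgf_sq_le hC₁ (hεmeas i) (htail i)
      _ = (1 + C₁) ^ n := by rw [Finset.prod_const, Finset.card_univ, Fintype.card_fin]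
  have hset : {ω | Kp * n ≤ ∑ i, (ε ω i) ^ 2} = {ω | Kp * n ≤ (∑ i, X i) ω} := by
    ext ω; simp [hX]
  rw [hset, ← ENNReal.ofReal_toReal (measure_ne_top μ _)]
  apply ENNReal.ofReal_le_ofReal
  calc (μ {ω | Kp * n ≤ (∑ i, X i) ω}).toReal
      ≤ rexp (-lam * (Kp * n)) * mgf (∑ i, X i) μ lam := hch
    _ ≤ rexp (-lam * (Kp * n)) * (1 + C₁) ^ n := by
        apply mul_le_mul_of_nonneg_left hmgf (exp_nonneg _)
    _ = rexp (-(n : ℝ)) := by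
        have h1C : (0:ℝ) < 1 + C₁ := by linarith
        have hpow : ((1 + C₁) : ℝ) ^ n = rexp (n * Real.log (1 + C₁)) := by
          rw [show (n:ℝ) * Real.log (1+C₁) = Real.log ((1+C₁)^n) by rw [Real.log_pow],
            Real.exp_log (by positivity)]
        rw [hpow, ← Real.exp_add]
        congr 1
        have : lam * Kp = Real.log (1 + C₁) + 1 := by
          rw [hlam, hKp]
          field_simp
        nlinarith [this]



lemma cond_coord_bound {n p : ℕ} (Z : W → Fin n → Fin p → ℝ) (ε : W → Fin n → ℝ)
    (hZ : Measurable Z) (hε : Measurable ε)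
    (hindep : IndepFun Z ε μ)
    (hiidZ : iIndepFun
      (fun q : Fin n × Fin p => fun ω => Z ω q.1 q.2) μ)
    (hgaussZ : ∀ i k, μ.map (fun ω => Z ω i k) = gaussianReal 0 1)
    (b : Fin p → ℝ) {D R T : ℝ} (hD : 0 < D) (hbD : ∑ k, (b k) ^ 2 ≤ D)
    (hR : 0 < R) (hT : 0 < T) :
    μ ({ω | T < |∑ r : Fin n × Fin p, b r.2 * ε ω r.1 * Z ω r.1 r.2|}
        ∩ {ω | ∑ i, (ε ω i) ^ 2 ≤ R})
      ≤ ENNReal.ofReal (2 * rexp (-(T ^ 2) / (2 * (D * R)))) := by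
  classical
  set G : (Fin n → Fin p → ℝ) × (Fin n → ℝ) → ℝ :=
    fun q => ∑ r : Fin n × Fin p, b r.2 * q.2 r.1 * q.1 r.1 r.2 with hGdef
  have hG : Measurable G := by
    apply Finset.measurable_sum
    intro r _
    exact ((measurable_const.mul ((measurable_pi_apply r.1).comp measurable_snd)).mul
      ((measurable_pi_apply r.2).comp ((measurable_pi_apply r.1).comp measurable_fst)))
  have hsq : Measurable fun q : (Fin n → Fin p → ℝ) × (Fin n → ℝ) => ∑ i, (q.2 i) ^ 2 := by
    apply Finset.measurable_sum
    intro i _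
    exact ((measurable_pi_apply i).comp measurable_snd).pow_const 2
  set S : Set ((Fin n → Fin p → ℝ) × (Fin n → ℝ)) :=
    {q | T < |G q|} ∩ {q | ∑ i, (q.2 i) ^ 2 ≤ R} with hSdef
  have hS : MeasurableSet S := by
    apply MeasurableSet.inter
    · exact measurableSet_lt measurable_const hG.abs
    · exact measurableSet_le hsq measurable_const
  have hpm : Measurable fun ω => (Z ω, ε ω) := hZ.prodMk hε
  have hev : ({ω | T < |∑ r : Fin n × Fin p, b r.2 * ε ω r.1 * Z ω r.1 r.2|}
      ∩ {ω | ∑ i, (ε ω i) ^ 2 ≤ R}) = (fun ω => (Z ω, ε ω)) ⁻¹' S := rfl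
  rw [hev, ← Measure.map_apply hpm hS]
  rw [(indepFun_iff_map_prod_eq_prod_map_map hZ.aemeasurable hε.aemeasurable).1 hindep]
  rw [Measure.prod_apply_symm hS]
  have hbound : ∀ e : Fin n → ℝ, (μ.map Z) ((fun z => (z, e)) ⁻¹' S)
      ≤ ENNReal.ofReal (2 * rexp (-(T ^ 2) / (2 * (D * R)))) := by
    intro e
    by_cases he : ∑ i, (e i) ^ 2 ≤ R
    · have hsetz : ((fun z => (z, e)) ⁻¹' S)
          = {z : Fin n → Fin p → ℝ | T < |∑ r : Fin n × Fin p, b r.2 * e r.1 * z r.1 r.2|} := by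
        ext z
        simp only [hSdef, Set.mem_preimage, Set.mem_inter_iff, Set.mem_setOf_eq, hGdef, he,
          and_true]
      rw [hsetz]
      have hmz : MeasurableSet
          {z : Fin n → Fin p → ℝ | T < |∑ r : Fin n × Fin p, b r.2 * e r.1 * z r.1 r.2|} := by
        apply measurableSet_lt measurable_const
        apply Measurable.abs
        apply Finset.measurable_sum
        intro r _
        exact (measurable_const.mul ((measurable_pi_apply r.2).comp (measurable_pi_apply r.1)))
      rw [Measure.map_apply hZ hmz]
      have := gauss_chernoff_abs (μ := μ) (fun r : Fin n × Fin p => fun ω => Z ω r.1 r.2)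
        (fun r => ((measurable_pi_apply r.2).comp ((measurable_pi_apply r.1).comp hZ)))
        hiidZ (fun r => hgaussZ r.1 r.2)
        (fun r => b r.2 * e r.1) (V := D * R) (T := T) (by positivity) ?_ hT
      · exact this
      · calc ∑ r : Fin n × Fin p, (b r.2 * e r.1) ^ 2
            = (∑ i, (e i) ^ 2) * (∑ k, (b k) ^ 2) := by
              rw [Fintype.sum_prod_type, Finset.sum_mul_sum]
              apply Finset.sum_congr rfl; intro i _
              apply Finset.sum_congr rfl; intro k _
              ring
          _ ≤ R * D := by
              apply mul_le_mul he hbD (Finset.sum_nonneg fun k _ => sq_nonneg _) hR.le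
          _ = D * R := mul_comm _ _
    · have hempty : ((fun z => (z, e)) ⁻¹' S) = ∅ := by
        ext z
        simp only [hSdef, Set.mem_preimage, Set.mem_inter_iff, Set.mem_setOf_eq, he,
          and_false, Set.mem_empty_iff_false]
      rw [hempty]
      simp
  have : IsProbabilityMeasure (μ.map ε) := Measure.isProbabilityMeasure_map hε.aemeasurable
  calc ∫⁻ e, (μ.map Z) ((fun z => (z, e)) ⁻¹' S) ∂(μ.map ε)
      ≤ ∫⁻ _, ENNReal.ofReal (2 * rexp (-(T ^ 2) / (2 * (D * R)))) ∂(μ.map ε) :=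
        lintegral_mono hbound
    _ = ENNReal.ofReal (2 * rexp (-(T ^ 2) / (2 * (D * R)))) := by
        rw [lintegral_const, measure_univ, mul_one]


end Helpers

lemma rayleigh_compact_bddAbove {p : ℕ} (A : Matrix (Fin p) (Fin p) ℝ) :
    BddAbove {r | ∃ x : Fin p → ℝ, ∑ i, (x i) ^ 2 = 1 ∧ r = x ⬝ᵥ A.mulVec x} := by
  have hset : {r | ∃ x : Fin p → ℝ, ∑ i, (x i) ^ 2 = 1 ∧ r = x ⬝ᵥ A.mulVec x}
      = (fun x : Fin p → ℝ => x ⬝ᵥ A.mulVec x) '' {x | ∑ i, (x i) ^ 2 = 1} := by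
    ext r; constructor
    · rintro ⟨x, hx, rfl⟩; exact ⟨x, hx, rfl⟩
    · rintro ⟨x, hx, rfl⟩; exact ⟨x, hx, rfl⟩
  rw [hset]
  have hcont : Continuous fun x : Fin p → ℝ => x ⬝ᵥ A.mulVec x := by
    simp only [dotProduct, Matrix.mulVec, dotProduct]
    fun_prop
  have hcomp : IsCompact {x : Fin p → ℝ | ∑ i, (x i) ^ 2 = 1} := by
    have hclosed : IsClosed {x : Fin p → ℝ | ∑ i, (x i) ^ 2 = 1} :=
      isClosed_eq (by fun_prop) continuous_const
    have hbdd : Bornology.IsBounded {x : Fin p → ℝ | ∑ i, (x i) ^ 2 = 1} := by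
      apply Bornology.IsBounded.subset (Metric.isBounded_closedBall (x := (0 : Fin p → ℝ)) (r := 1))
      intro x hx
      simp only [Metric.mem_closedBall, dist_zero_right]
      rw [pi_norm_le_iff_of_nonneg zero_le_one]
      intro i
      rw [Real.norm_eq_abs, abs_le]
      have hle : (x i) ^ 2 ≤ 1 := by
        have := Finset.single_le_sum (f := fun i => (x i)^2) (fun i _ => sq_nonneg _)
          (Finset.mem_univ i)
        rw [hx] at this; exact this
      constructor <;> nlinarith [sq_nonneg (x i)]
    exact Metric.isCompact_of_isClosed_isBounded hclosed hbdd
  exact (hcomp.image hcont).bddAbove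

lemma diag_le_lambdaMax {p : ℕ} (A : Matrix (Fin p) (Fin p) ℝ) (j : Fin p) :
    A j j ≤ lambdaMax A := by
  apply le_csSup (rayleigh_compact_bddAbove A)
  refine ⟨Pi.single j 1, ?_, ?_⟩
  · simp [Pi.single_apply, Finset.sum_ite_eq']
  · simp [dotProduct, Matrix.mulVec, Pi.single_apply, Finset.sum_ite_eq', mul_comm]

lemma quadratic_single {p : ℕ} (A : Matrix (Fin p) (Fin p) ℝ) (j : Fin p) :
    (Pi.single j 1 : Fin p → ℝ) ⬝ᵥ A.mulVec (Pi.single j 1) = A j j := by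
  simp [dotProduct, Matrix.mulVec, Pi.single_apply, Finset.sum_ite_eq', mul_comm]

/-- Column square sums of `Bmat` are bounded by `4M`. -/
lemma Bmat_col_sq_le {p : ℕ} {M : ℝ} (hM : 1 ≤ M)
    (Om₀ : Matrix (Fin p) (Fin p) ℝ) (s : Fin p → ℝ)
    (hpd : Om₀.PosDef) (hlmax : lambdaMax (Om₀⁻¹) ≤ M) (hs : ∀ j, 0 ≤ s j)
    (hpsd1 : (Om₀⁻¹ - (1 / 2 : ℝ) • Matrix.diagonal s).PosSemidef)
    (hpsd2 : ((2 : ℝ) • Matrix.diagonal s -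
        Matrix.diagonal s * Om₀ * Matrix.diagonal s).PosSemidef) :
    ∀ j, ∑ k, (Bmat s Om₀ k j) ^ 2 ≤ 4 * M := by
  intro j
  set A := (2 : ℝ) • Matrix.diagonal s - Matrix.diagonal s * Om₀ * Matrix.diagonal s with hA
  set U : Matrix (Fin p) (Fin p) ℝ := (hpsd2.1.eigenvectorUnitary : Matrix (Fin p) (Fin p) ℝ) with hU
  set Dg : Matrix (Fin p) (Fin p) ℝ := Matrix.diagonal (Real.sqrt ∘ hpsd2.1.eigenvalues) with hDg
  set Sq : Matrix (Fin p) (Fin p) ℝ := U * Dg * star U with hSq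
  have hB : Bmat s Om₀ = Sq := by rw [Bmat, msqrt, dif_pos hpsd2]
  have hUU : star U * U = 1 := by rw [hU, ← Unitary.coe_star]; exact Unitary.coe_star_mul_self _
  have hDD : Dg * Dg = Matrix.diagonal hpsd2.1.eigenvalues := by
    rw [hDg, Matrix.diagonal_mul_diagonal]; congr 1; funext i
    simp [Real.mul_self_sqrt (hpsd2.eigenvalues_nonneg i)]
  have hBB : Sq * Sq = A := by
    have h := hpsd2.1.spectral_theorem
    rw [Unitary.conjStarAlgAut_apply] at h
    calc Sq * Sq = U * (Dg * (star U * U) * Dg) * star U := by simp only [hSq, mul_assoc]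
      _ = A := by
        rw [hUU, mul_one, hDD]
        conv_rhs => rw [h]
        simp [hU, Function.comp_def]
  have hBsym : ∀ k l, Sq k l = Sq l k := by
    intro k l
    have hT : Sqᴴ = Sq := by simp [hSq, Matrix.conjTranspose_mul, mul_assoc, hDg, Matrix.star_eq_conjTranspose,
      Matrix.conjTranspose_eq_transpose_of_trivial]
    have := congrFun (congrFun hT l) k
    simpa using this
  have hsum : ∑ k, (Bmat s Om₀ k j) ^ 2 = A j j := by
    rw [hB]
    calc ∑ k, (Sq k j) ^ 2 = (Sq * Sq) j j := by
          rw [Matrix.mul_apply]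
          apply Finset.sum_congr rfl
          intro k _
          rw [hBsym j k]; ring
      _ = A j j := by rw [hBB]
  rw [hsum]
  have hAjj : A j j = 2 * s j - s j * Om₀ j j * s j := by
    simp [hA, Matrix.sub_apply, Matrix.smul_apply, Matrix.diagonal_apply_eq,
      Matrix.diagonal_mul, Matrix.mul_diagonal]
  have hOmjj : 0 ≤ Om₀ j j := by
    have h := hpd.dotProduct_mulVec_pos (x := Pi.single j 1) (by simp [Pi.single_eq_same, Function.ne_iff])
    rw [show (star (Pi.single j 1 : Fin p → ℝ)) = Pi.single j 1 from rfl] at h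
    rw [quadratic_single] at h
    exact h.le
  have hsj : s j ≤ 2 * M := by
    have h := hpsd1.dotProduct_mulVec_nonneg (Pi.single j 1)
    rw [show (star (Pi.single j 1 : Fin p → ℝ)) = Pi.single j 1 from rfl] at h
    rw [quadratic_single] at h
    have hdiag : (Om₀⁻¹ - (1 / 2 : ℝ) • Matrix.diagonal s) j j
        = Om₀⁻¹ j j - s j / 2 := by
      simp [Matrix.sub_apply, Matrix.smul_apply, Matrix.diagonal_apply_eq]
      ring
    rw [hdiag] at h
    have hOinv : Om₀⁻¹ j j ≤ M := le_trans (diag_le_lambdaMax _ j) hlmax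
    linarith
  nlinarith [hs j, sq_nonneg (s j)]



/-- with high probability, `‖n⁻¹ B₀ᵀ Zᵀ ε‖∞ ≤ C √((log p)/n)`. -/
theorem stmt_10 :
    ∀ M C₁ : ℝ, 1 ≤ M → 0 < C₁ →
      ∃ c > (0 : ℝ), ∃ C > (0 : ℝ),
        ∀ (n p : ℕ), 1 ≤ n → 2 ≤ p → C ^ 2 * Real.log p ≤ n →
          ∀ (Om₀ : Matrix (Fin p) (Fin p) ℝ) (s : Fin p → ℝ),
            Om₀.IsSymm → Om₀.PosDef →
            lambdaMax (Om₀⁻¹) ≤ M →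
            (∀ j, 0 ≤ s j) →
            (Om₀⁻¹ - (1 / 2 : ℝ) • Matrix.diagonal s).PosSemidef →
            ((2 : ℝ) • Matrix.diagonal s -
                Matrix.diagonal s * Om₀ * Matrix.diagonal s).PosSemidef →
            ∀ (W : Type) [inst : MeasurableSpace W] (μ : Measure W),
              IsProbabilityMeasure μ →
              ∀ (Z : W → Fin n → Fin p → ℝ) (ε : W → Fin n → ℝ),
                Measurable Z → Measurable ε →
                -- Z has i.i.d. N(0,1) entries
                iIndepFun
                  (fun ij : Fin n × Fin p => fun ω => Z ω ij.1 ij.2) μ →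
                (∀ i j, μ.map (fun ω => Z ω i j) = gaussianReal 0 1) →
                -- ε is independent of Z, with i.i.d. sub-Gaussian components
                IndepFun Z ε μ →
                iIndepFun (fun i ω => ε ω i) μ →
                (∀ i j, μ.map (fun ω => ε ω i) = μ.map (fun ω => ε ω j)) →
                (∀ i t, 0 < t →
                  μ {ω | t < |ε ω i|} ≤ ENNReal.ofReal (C₁ * Real.exp (-(t ^ 2) / C₁))) →
                ENNReal.ofReal (1 - C * (p : ℝ) ^ (-c)) ≤
                  μ {ω |
                    supNorm ((n : ℝ)⁻¹ •
                        (Bmat s Om₀)ᵀ.mulVec ((Matrix.of (Z ω))ᵀ.mulVec (ε ω))) ≤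
                      C * Real.sqrt (Real.log p / n)} := by
  intro M C₁ hM hC₁
  have hM0 : (0:ℝ) < M := by linarith
  have hlog1C : 0 < Real.log (1 + C₁) + 1 :=
    add_pos (Real.log_pos (by linarith)) one_pos
  set Kp : ℝ := 2 * C₁ * (Real.log (1 + C₁) + 1) with hKpdef
  have hKp_pos : 0 < Kp := mul_pos (by positivity) hlog1C
  set D : ℝ := 4 * M with hDdef
  have hD : 0 < D := by positivity
  set C : ℝ := max 3 (Real.sqrt (16 * M * Kp)) with hCdef
  have hC3 : (3:ℝ) ≤ C := le_max_left _ _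
  have hC0 : (0:ℝ) < C := by linarith
  have hCsq : 16 * M * Kp ≤ C ^ 2 := by
    have h := le_max_right 3 (Real.sqrt (16 * M * Kp))
    have h16 : (0:ℝ) ≤ 16 * M * Kp := by positivity
    nlinarith [Real.sq_sqrt h16, Real.sqrt_nonneg (16 * M * Kp)]
  refine ⟨1, one_pos, C, hC0, ?_⟩
  intro n p hn hp hnp Om₀ s hsymm hpd hlmax hs hpsd1 hpsd2 W instW μ hprob Z ε hZ hε
    hiidZ hgaussZ hindep hiidε hident htail
  haveI := hprob
  have hp1 : (1:ℝ) < p := by exact_mod_cast hp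
  have hlogp : 0 < Real.log p := Real.log_pos hp1
  have hnR : (0:ℝ) < n := by exact_mod_cast Nat.lt_of_lt_of_le Nat.zero_lt_one hn
  set B : Matrix (Fin p) (Fin p) ℝ := Bmat s Om₀ with hBdef
  have hcol : ∀ j, ∑ k, (B k j) ^ 2 ≤ D := by
    intro j
    have := Bmat_col_sq_le hM Om₀ s hpd hlmax hs hpsd1 hpsd2 j
    rw [hDdef]; exact this
  set t : ℝ := C * Real.sqrt (Real.log p / n) with htdef
  have ht_pos : 0 < t := mul_pos hC0 (Real.sqrt_pos.2 (div_pos hlogp hnR))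
  set T : ℝ := (n:ℝ) * t with hTdef
  have hT : 0 < T := mul_pos hnR ht_pos
  have hT2 : T ^ 2 = C ^ 2 * n * Real.log p := by
    rw [hTdef, htdef, mul_pow, mul_pow, Real.sq_sqrt (div_nonneg hlogp.le hnR.le)]
    field_simp
  set R : ℝ := Kp * (n:ℝ) with hRdef
  have hR_pos : 0 < R := mul_pos hKp_pos hnR
  set F : Fin p → W → ℝ :=
    fun j ω => ∑ r : Fin n × Fin p, B r.2 j * ε ω r.1 * Z ω r.1 r.2 with hFdef
  have hFmeas : ∀ j, Measurable (F j) := by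
    intro j
    apply Finset.measurable_sum
    intro r _
    exact ((measurable_const.mul ((measurable_pi_apply r.1).comp hε)).mul
      ((measurable_pi_apply r.2).comp ((measurable_pi_apply r.1).comp hZ)))
  set E1 : Set W := {ω | ∑ i, (ε ω i) ^ 2 ≤ R} with hE1def
  have hE1meas : MeasurableSet E1 :=
    measurableSet_le (Finset.measurable_sum _ fun i _ =>
      ((measurable_pi_apply i).comp hε).pow_const 2) measurable_const
  set good : Set W := E1 ∩ ⋂ j, {ω | |F j ω| ≤ T} with hgooddef
  have hgoodmeas : MeasurableSet good :=
    hE1meas.inter (MeasurableSet.iInter fun j =>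
      measurableSet_le (hFmeas j).abs measurable_const)
  have hvj : ∀ ω j, ((n : ℝ)⁻¹ •
      (Bmat s Om₀)ᵀ.mulVec ((Matrix.of (Z ω))ᵀ.mulVec (ε ω))) j = (n:ℝ)⁻¹ * F j ω := by
    intro ω j
    simp only [Pi.smul_apply, smul_eq_mul]
    congr 1
    simp only [Matrix.mulVec, dotProduct, Matrix.transpose_apply, Matrix.of_apply, hFdef,
      ← hBdef]
    rw [Fintype.sum_prod_type]
    rw [Finset.sum_comm]
    apply Finset.sum_congr rfl
    intro k _
    rw [Finset.mul_sum]
    apply Finset.sum_congr rfl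
    intro i _
    ring
  have hsubgoal : good ⊆ {ω | supNorm ((n : ℝ)⁻¹ •
      (Bmat s Om₀)ᵀ.mulVec ((Matrix.of (Z ω))ᵀ.mulVec (ε ω))) ≤
        C * Real.sqrt (Real.log p / n)} := by
    intro ω hω
    have hωE : ω ∈ E1 := hω.1
    have hωj : ∀ j, |F j ω| ≤ T := by
      intro j
      exact Set.mem_iInter.1 hω.2 j
    show supNorm _ ≤ C * Real.sqrt (Real.log p / n)
    haveI : Nonempty (Fin p) := ⟨⟨0, by omega⟩⟩
    rw [supNorm]
    apply ciSup_le
    intro j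
    rw [hvj ω j, abs_mul, abs_inv, abs_of_nonneg (le_of_lt hnR)]
    calc (n:ℝ)⁻¹ * |F j ω| ≤ (n:ℝ)⁻¹ * T := by
          apply mul_le_mul_of_nonneg_left (hωj j) (by positivity)
      _ = t := by
          rw [hTdef]; field_simp
  have hbad1 : μ {ω | R ≤ ∑ i, (ε ω i) ^ 2} ≤ ENNReal.ofReal (Real.exp (-(n:ℝ))) := by
    have := eps_chernoff hC₁ ε hε hiidε htail
    rw [hRdef, hKpdef]
    exact this
  have hbadj : ∀ j, μ ({ω | T < |F j ω|} ∩ E1)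
      ≤ ENNReal.ofReal (2 * Real.exp (-(T ^ 2) / (2 * (D * R)))) := by
    intro j
    exact cond_coord_bound Z ε hZ hε hindep hiidZ hgaussZ (fun k => B k j) hD (hcol j)
      hR_pos hT
  have hcompl : goodᶜ ⊆ {ω | R ≤ ∑ i, (ε ω i) ^ 2} ∪ ⋃ j, ({ω | T < |F j ω|} ∩ E1) := by
    intro ω hω
    by_cases hE : ω ∈ E1
    · right
      have : ¬ ω ∈ ⋂ j, {ω | |F j ω| ≤ T} := fun h => hω ⟨hE, h⟩
      rw [Set.mem_iInter] at this
      push_neg at this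
      obtain ⟨j, hj⟩ := this
      refine Set.mem_iUnion.2 ⟨j, ⟨?_, hE⟩⟩
      show T < |F j ω|
      exact not_le.1 hj
    · left
      show R ≤ ∑ i, (ε ω i) ^ 2
      simp only [hE1def, Set.mem_setOf_eq] at hE
      exact le_of_not_ge hE
  have hexp1 : Real.exp (-(n:ℝ)) ≤ (p:ℝ)⁻¹ := by
    have hlogn : Real.log p ≤ (n:ℝ) := by
      have hC2 : (1:ℝ) ≤ C ^ 2 := by nlinarith
      have h1 := mul_le_mul_of_nonneg_right hC2 hlogp.le
      rw [one_mul] at h1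
      linarith
    calc Real.exp (-(n:ℝ)) ≤ Real.exp (-Real.log p) := by
          apply Real.exp_le_exp.2; linarith
      _ = (p:ℝ)⁻¹ := by rw [Real.exp_neg, Real.exp_log (by positivity)]
  have hexp2 : 2 * Real.exp (-(T ^ 2) / (2 * (D * R))) ≤ 2 * (((p:ℝ) ^ 2)⁻¹) := by
    have hkey : 2 * Real.log p ≤ T ^ 2 / (2 * (D * R)) := by
      rw [le_div_iff₀ (by positivity)]
      rw [hT2, hDdef, hRdef]
      have hmul := mul_le_mul_of_nonneg_right hCsq (mul_nonneg hnR.le hlogp.le)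
      nlinarith [hmul]
    have : Real.exp (-(T ^ 2) / (2 * (D * R))) ≤ ((p:ℝ) ^ 2)⁻¹ := by
      calc Real.exp (-(T ^ 2) / (2 * (D * R))) = Real.exp (-(T ^ 2 / (2 * (D * R)))) := by
            rw [neg_div]
        _ ≤ Real.exp (-(2 * Real.log p)) := by
            apply Real.exp_le_exp.2; linarith
        _ = ((p:ℝ) ^ 2)⁻¹ := by
            rw [Real.exp_neg]
            congr 1
            rw [show 2 * Real.log p = Real.log ((p:ℝ) ^ 2) by
              rw [Real.log_pow]; push_cast; ring]
            exact Real.exp_log (by positivity)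
    linarith
  have hgoodc : μ goodᶜ ≤ ENNReal.ofReal (3 * (p:ℝ)⁻¹) := by
    calc μ goodᶜ ≤ μ ({ω | R ≤ ∑ i, (ε ω i) ^ 2} ∪ ⋃ j, ({ω | T < |F j ω|} ∩ E1)) :=
          measure_mono hcompl
      _ ≤ μ {ω | R ≤ ∑ i, (ε ω i) ^ 2} + μ (⋃ j, ({ω | T < |F j ω|} ∩ E1)) :=
          measure_union_le _ _
      _ ≤ ENNReal.ofReal (Real.exp (-(n:ℝ))) + ∑' j, μ ({ω | T < |F j ω|} ∩ E1) :=
          add_le_add hbad1 (measure_iUnion_le _)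
      _ ≤ ENNReal.ofReal ((p:ℝ)⁻¹)
          + ∑' j : Fin p, ENNReal.ofReal (2 * Real.exp (-(T ^ 2) / (2 * (D * R)))) := by
          refine add_le_add (ENNReal.ofReal_le_ofReal hexp1) ?_
          exact ENNReal.tsum_le_tsum fun j => hbadj j
      _ = ENNReal.ofReal ((p:ℝ)⁻¹)
          + (p : ℝ≥0∞) * ENNReal.ofReal (2 * Real.exp (-(T ^ 2) / (2 * (D * R)))) := by
          rw [tsum_fintype]
          simp [Finset.sum_const, Finset.card_univ]
      _ ≤ ENNReal.ofReal ((p:ℝ)⁻¹)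
          + (p : ℝ≥0∞) * ENNReal.ofReal (2 * (((p:ℝ) ^ 2)⁻¹)) := by
          exact add_le_add le_rfl (mul_le_mul_right (ENNReal.ofReal_le_ofReal hexp2) _)
      _ = ENNReal.ofReal ((p:ℝ)⁻¹) + ENNReal.ofReal ((p:ℝ) * (2 * (((p:ℝ) ^ 2)⁻¹))) := by
          rw [← ENNReal.ofReal_natCast p, ← ENNReal.ofReal_mul (by positivity)]
      _ = ENNReal.ofReal ((p:ℝ)⁻¹ + (p:ℝ) * (2 * (((p:ℝ) ^ 2)⁻¹))) := by
          rw [ENNReal.ofReal_add (by positivity) (by positivity)]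
      _ = ENNReal.ofReal (3 * (p:ℝ)⁻¹) := by
          congr 1
          have hp0 : (p:ℝ) ≠ 0 := by positivity
          field_simp
          ring
  have hgoodc' : μ goodᶜ ≤ ENNReal.ofReal (C * (p:ℝ)⁻¹) := by
    refine le_trans hgoodc (ENNReal.ofReal_le_ofReal ?_)
    have h0 : (0:ℝ) ≤ (p:ℝ)⁻¹ := by positivity
    exact mul_le_mul_of_nonneg_right hC3 h0
  calc ENNReal.ofReal (1 - C * (p:ℝ) ^ (-(1:ℝ)))
      = 1 - ENNReal.ofReal (C * (p:ℝ)⁻¹) := by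
        rw [Real.rpow_neg_one, ENNReal.ofReal_sub _ (by positivity), ENNReal.ofReal_one]
    _ ≤ 1 - μ goodᶜ := tsub_le_tsub_left hgoodc' 1
    _ = μ good := by
        have h := prob_compl_eq_one_sub (μ := μ) hgoodmeas.compl
        rw [compl_compl] at h
        exact h.symm
    _ ≤ _ := measure_mono hsubgoal


end
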